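/- arXiv:math/0512330 — 2 statements merged into one kernel-verified Lean document; each statement's English description precedes it below -/
import Mathlib

section
/- For every holomorphic tangent vector field Z on M one has g(D_Z N, N̄) = g([T, Z], T), where [T,Z] is the Lie bracket (computed via smooth extensions; its value along M is independent of the extensions). -/
noncomputable section
open scoped BigOperators

/-- `ℂ^{n+1}`, identified with `ℝ^{2n+2}` via its real structure. -/
abbrev E (n : ℕ) : Type := EuclideanSpace ℂ (Fin (n + 1))

/-- The standard complex structure: multiplication by `i`. -/
def J {n : ℕ} (v : E n) : E n := Complex.I • v

/-- The real inner product `⟨x, y⟩ = Re ⟪x, y⟫`. -/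
def rI {n : ℕ} (x y : E n) : ℝ := (inner ℂ x y : ℂ).re

/-- The (real) tangent space at `p` of a hypersurface with unit normal `ν`. -/
def tangAt {n : ℕ} (ν : E n → E n) (p : E n) : Set (E n) := {X | rI (ν p) X = 0}

/-- `M` is a smooth embedded real hypersurface of `ℂ^{n+1}` (locally a regular zero
set of a smooth real function), oriented by the smooth unit normal field `ν`
(extended smoothly to the ambient space). -/
def IsHypersurface {n : ℕ} (M : Set (E n)) (ν : E n → E n) : Prop :=
  ContDiff ℝ (⊤ : ℕ∞) ν ∧ (∀ p ∈ M, ‖ν p‖ = 1) ∧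
    ∀ p ∈ M, ∃ (V : Set (E n)) (F : E n → ℝ), IsOpen V ∧ p ∈ V ∧
      ContDiffOn ℝ (⊤ : ℕ∞) F V ∧ (M ∩ V = {z ∈ V | F z = 0}) ∧
      ∀ z ∈ M ∩ V, ∀ X : E n, (fderiv ℝ F z X = 0 ↔ X ∈ tangAt ν z)

/-- The horizontal (maximal complex) subspace `H_p = {X ∈ T_pM : JX ∈ T_pM}`. -/
def horizAt {n : ℕ} (ν : E n → E n) (p : E n) : Set (E n) :=
  {X | X ∈ tangAt ν p ∧ J X ∈ tangAt ν p}

/-- The second fundamental form `h(X,Y) = ⟨X, ∂_Y ν⟩`. -/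
def sff {n : ℕ} (ν : E n → E n) (p : E n) (X Y : E n) : ℝ :=
  rI X (fderiv ℝ ν p Y)

/-- The family `X_1, …, X_n, J X_1, …, J X_n`. -/
def combined {n : ℕ} (X : Fin n → E n) : (Fin n ⊕ Fin n) → E n :=
  Sum.elim X (fun α => J (X α))

/-- `{X_1, …, X_n, J X_1, …, J X_n}` is an orthonormal basis of the horizontal
space at `p` (w.r.t. the real inner product). -/
def IsHorizONB {n : ℕ} (ν : E n → E n) (p : E n) (X : Fin n → E n) : Prop :=
  (∀ α, X α ∈ horizAt ν p) ∧
  (∀ i j, rI (combined X i) (combined X j) = if i = j then 1 else 0) ∧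
  (∀ Y ∈ horizAt ν p, Y ∈ Submodule.span ℝ (Set.range (combined X)))

/-! ## Complexified tangent vectors
A complexified vector `X + iY` (the complexification unit `i` is distinct from
the complex structure `J`) is modelled as the pair `(X, Y)`. -/

/-- Complexified vectors of `ℂ^{n+1}`: `(X, Y)` stands for `X + iY`. -/
abbrev CV (n : ℕ) : Type := E n × E n

/-- Conjugation `X + iY ↦ X - iY`. -/
def conjCV {n : ℕ} (v : CV n) : CV n := (v.1, -v.2)

/-- Multiplication of a complexified vector by a complex scalar. -/
def csmul {n : ℕ} (c : ℂ) (v : CV n) : CV n :=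
  (c.re • v.1 - c.im • v.2, c.re • v.2 + c.im • v.1)

/-- `g`, the complex-bilinear extension of the real inner product. -/
def gC {n : ℕ} (v w : CV n) : ℂ :=
  ((rI v.1 w.1 - rI v.2 w.2 : ℝ) : ℂ) + ((rI v.1 w.2 + rI v.2 w.1 : ℝ) : ℂ) * Complex.I

/-- The flat connection `D` of `ℂ^{n+1}` (componentwise directional derivative),
complex-bilinearly extended: `DD V u p = D_u V (p)`. -/
def DD {n : ℕ} (V : E n → CV n) (u : CV n) (p : E n) : CV n :=
  (fderiv ℝ (fun z => (V z).1) p u.1 - fderiv ℝ (fun z => (V z).2) p u.2,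
   fderiv ℝ (fun z => (V z).1) p u.2 + fderiv ℝ (fun z => (V z).2) p u.1)

/-- The Lie bracket `[U,V]` of complexified fields (for the flat ambient space
it is `D_U V - D_V U`). -/
def bracket {n : ℕ} (U V : E n → CV n) (p : E n) : CV n :=
  DD V (U p) p - DD U (V p) p

/-- Derivative `U f` of a complex function along a complexified vector. -/
def dC {n : ℕ} (f : E n → ℂ) (u : CV n) (p : E n) : ℂ :=
  (fderiv ℝ f p u.1) + Complex.I * (fderiv ℝ f p u.2)

/-- The field `T = J(ν)`, viewed as a complexified field. -/
def TF {n : ℕ} (ν : E n → E n) (z : E n) : CV n := (J (ν z), 0)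

/-- The holomorphic unit normal `N = (ν - iT)/√2`. -/
def NF {n : ℕ} (ν : E n → E n) (z : E n) : CV n :=
  ((Real.sqrt 2)⁻¹ • ν z, -((Real.sqrt 2)⁻¹ • J (ν z)))

/-- The complex-bilinear extension of the second fundamental form:
`h(Z, W) = g(Z, D_W ν)`. -/
def hC {n : ℕ} (ν : E n → E n) (p : E n) (v w : CV n) : ℂ :=
  gC v (fderiv ℝ ν p w.1, fderiv ℝ ν p w.2)

/-- Conjugate of a complexified field. -/
def conjF {n : ℕ} (V : E n → CV n) : E n → CV n := fun z => conjCV (V z)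

/-- A holomorphic tangent field `Z = X - iJX`, with `X` a smooth real field
satisfying `⟪X, ν⟫ = 0` (hermitian orthogonality) at every point of `M`. -/
def IsHoloField {n : ℕ} (M : Set (E n)) (ν : E n → E n) (Z : E n → CV n) : Prop :=
  ContDiff ℝ (⊤ : ℕ∞) (fun z => (Z z).1) ∧
  (∀ z, (Z z).2 = -J ((Z z).1)) ∧
  ∀ p ∈ M, (inner ℂ (ν p) ((Z p).1) : ℂ) = 0

/-- A complexified tangent field: a smooth field whose value at every point of
`M` lies in the complexified tangent space `ℂ T_p M`. -/
def IsCTField {n : ℕ} (M : Set (E n)) (ν : E n → E n) (V : E n → CV n) : Prop :=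
  ContDiff ℝ (⊤ : ℕ∞) (fun z => (V z).1) ∧ ContDiff ℝ (⊤ : ℕ∞) (fun z => (V z).2) ∧
  ∀ p ∈ M, rI (ν p) ((V p).1) = 0 ∧ rI (ν p) ((V p).2) = 0

/-- Projection of a real vector onto the real horizontal space (orthogonal
complement of `ν` and `T = Jν`). -/
def horR {n : ℕ} (ν : E n → E n) (z : E n) (x : E n) : E n :=
  x - rI (ν z) x • ν z - rI (J (ν z)) x • J (ν z)

/-- Projection `Π_H` of a complexified tangent vector onto the holomorphic bundle. -/
def PiH {n : ℕ} (ν : E n → E n) (z : E n) (v : CV n) : CV n :=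
  ((2 : ℝ)⁻¹ • (horR ν z v.1 + J (horR ν z v.2)),
   (2 : ℝ)⁻¹ • (horR ν z v.2 - J (horR ν z v.1)))

/-- Projection `Π_H̄` onto the antiholomorphic bundle. -/
def PiHb {n : ℕ} (ν : E n → E n) (z : E n) (v : CV n) : CV n :=
  ((2 : ℝ)⁻¹ • (horR ν z v.1 - J (horR ν z v.2)),
   (2 : ℝ)⁻¹ • (horR ν z v.2 + J (horR ν z v.1)))

/-- The connection `∇`: writing `V = Z + W̄ + fT` with `Z = Π_H V` holomorphic,
`W̄ = Π_H̄ V` antiholomorphic and `f = g(V, T)`, one sets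
`∇_u V = D_u Z - g(D_u Z, N̄) N + D_u W̄ - g(D_u W̄, N) N̄ + (u f) T`. -/
def nabla {n : ℕ} (ν : E n → E n) (V : E n → CV n) (u : CV n) (p : E n) : CV n :=
  (DD (fun z => PiH ν z (V z)) u p
      - csmul (gC (DD (fun z => PiH ν z (V z)) u p) (conjCV (NF ν p))) (NF ν p))
  + (DD (fun z => PiHb ν z (V z)) u p
      - csmul (gC (DD (fun z => PiHb ν z (V z)) u p) (NF ν p)) (conjCV (NF ν p)))
  + csmul (dC (fun z => gC (V z) (TF ν z)) u p) (TF ν p)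

/-- The torsion `Tor_∇(U,V) = ∇_U V - ∇_V U - [U,V]`. -/
def Tor {n : ℕ} (ν : E n → E n) (U V : E n → CV n) (p : E n) : CV n :=
  nabla ν V (U p) p - nabla ν U (V p) p - bracket U V p

/-- The covariant derivative of the second fundamental form:
`∇_Z h (U, W) = Z h(U,W) - h(∇_Z U, W) - h(U, ∇_Z W)`. -/
def nablaHform {n : ℕ} (ν : E n → E n) (Zf U W : E n → CV n) (p : E n) : ℂ :=
  dC (fun z => hC ν z (U z) (W z)) (Zf p) p
    - hC ν p (nabla ν U (Zf p) p) (W p) - hC ν p (U p) (nabla ν W (Zf p) p)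

/-! Write `Z = X - iJX`, `A = Dν`, `B = DX` and `T = Jν`. Both sides are explicit in the real
inner products of `AX`, `A(JX)` and `B T` with `ν` and `T`, and they agree by three facts
along `M`: `⟨Au, ν⟩ = 0` for tangent `u` (differentiate `|ν|² = 1`), and the real and imaginary
parts of `⟪AT, X⟫ + ⟪ν, BT⟫ = 0` (differentiate `⟪ν, X⟫ = 0` along `T`), combined with the
symmetry of the second fundamental form `⟨Au, w⟩`. -/

open scoped Topology

section RealInner
variable {n : ℕ}

lemma rI_comm (x y : E n) : rI x y = rI y x := by
  rw [rI, rI, ← inner_conj_symm y x, Complex.conj_re]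

lemma rI_add_left (x y z : E n) : rI (x + y) z = rI x z + rI y z := by
  simp [rI]

lemma rI_sub_left (x y z : E n) : rI (x - y) z = rI x z - rI y z := by
  simp [rI]

lemma rI_sub_right (x y z : E n) : rI x (y - z) = rI x y - rI x z := by
  simp [rI]

lemma rI_neg_left (x y : E n) : rI (-x) y = -rI x y := by
  simp [rI]

lemma rI_neg_right (x y : E n) : rI x (-y) = -rI x y := by
  simp [rI]

lemma rI_smul_left (r : ℝ) (x y : E n) : rI (r • x) y = r * rI x y := by
  simp [rI, ← Complex.coe_smul, mul_comm]

lemma rI_smul_right (r : ℝ) (x y : E n) : rI x (r • y) = r * rI x y := by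
  simp [rI, ← Complex.coe_smul]

lemma rI_zero_left (x : E n) : rI 0 x = 0 := by
  simp [rI]

lemma rI_zero_right (x : E n) : rI x 0 = 0 := by
  simp [rI]

lemma I_smul_eq_J (x : E n) : Complex.I • x = J x := rfl

lemma rI_J_left (x y : E n) : rI (J x) y = -rI x (J y) := by
  simp [rI, J]

lemma rI_J_J (x y : E n) : rI (J x) (J y) = rI x y := by
  rw [rI_J_left, J, J, smul_smul, Complex.I_mul_I, neg_one_smul, rI_neg_right, neg_neg]

lemma J_J (x : E n) : J (J x) = -x := by
  rw [J, J, smul_smul, Complex.I_mul_I, neg_one_smul]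

lemma rI_J_right (x y : E n) : rI x (J y) = -(inner ℂ x y).im := by
  simp [rI, J]

lemma rI_self (x : E n) : rI x x = ‖x‖ ^ 2 :=
  inner_self_eq_norm_sq (𝕜 := ℂ) x

end RealInner

section Tangency
variable {n : ℕ} {ν : E n → E n} {p : E n}

lemma mem_tangAt_of_inner_eq_zero {x : E n} (h : inner ℂ (ν p) x = 0) : x ∈ tangAt ν p := by
  simp [tangAt, rI, h]

lemma J_mem_tangAt_of_inner_eq_zero {x : E n} (h : inner ℂ (ν p) x = 0) :
    J x ∈ tangAt ν p := by
  simp [tangAt, rI_J_right, h]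

lemma J_normal_mem_tangAt : J (ν p) ∈ tangAt ν p := by
  simp [tangAt, rI_J_right, inner_self_eq_norm_sq_to_K, ← Complex.ofReal_pow]

end Tangency

section Derivatives
variable {n : ℕ} {ν : E n → E n} {p : E n}

lemma gC_DD_NF_conjCV (hν : DifferentiableAt ℝ ν p) {u : CV n} (hu : u.2 = -J u.1) :
    gC (DD (NF ν) u p) (conjCV (NF ν p)) =
      ((rI (fderiv ℝ ν p u.1) (ν p) + rI (fderiv ℝ ν p (J u.1)) (J (ν p)) : ℝ) : ℂ) +
      ((rI (fderiv ℝ ν p u.1) (J (ν p)) - rI (fderiv ℝ ν p (J u.1)) (ν p) : ℝ) : ℂ) *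
        Complex.I := by
  have h1 : fderiv ℝ (fun z => (NF ν z).1) p = (√2)⁻¹ • fderiv ℝ ν p :=
    (hν.hasFDerivAt.const_smul (√2)⁻¹).fderiv
  have h2 : fderiv ℝ (fun z => (NF ν z).2) p = -((√2)⁻¹ • Complex.I • fderiv ℝ ν p) :=
    ((hν.hasFDerivAt.const_smul Complex.I).const_smul (√2)⁻¹).neg.fderiv
  have hs : (√2)⁻¹ ^ 2 = (2 : ℝ)⁻¹ := by
    rw [inv_pow, Real.sq_sqrt zero_le_two]
  rw [DD, h1, h2, hu]
  simp only [gC, conjCV, NF, neg_apply, FunLike.coe_smul, Pi.smul_apply, I_smul_eq_J, map_neg,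
    rI_add_left, rI_sub_left, rI_neg_left, rI_neg_right, rI_smul_left, rI_smul_right, rI_J_left,
    J_J]
  congr 3 <;> ring_nf <;> rw [hs] <;> ring

lemma gC_bracket_TF (hν : DifferentiableAt ℝ ν p) {Z : E n → CV n}
    (hX : DifferentiableAt ℝ (fun z => (Z z).1) p) (hZ : ∀ z, (Z z).2 = -J (Z z).1) :
    gC (bracket (TF ν) Z p) (TF ν p) =
      ((rI (fderiv ℝ (fun z => (Z z).1) p (J (ν p))) (J (ν p))
          - rI (fderiv ℝ ν p (Z p).1) (ν p) : ℝ) : ℂ) +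
      ((rI (fderiv ℝ ν p (J (Z p).1)) (ν p)
          - rI (fderiv ℝ (fun z => (Z z).1) p (J (ν p))) (ν p) : ℝ) : ℂ) * Complex.I := by
  have hT1 : fderiv ℝ (fun z => (TF ν z).1) p = Complex.I • fderiv ℝ ν p :=
    (hν.hasFDerivAt.const_smul Complex.I).fderiv
  have hT2 : fderiv ℝ (fun z => (TF ν z).2) p = 0 := fderiv_const_apply 0
  have hZ2 : fderiv ℝ (fun z => (Z z).2) p = -(Complex.I • fderiv ℝ (fun z => (Z z).1) p) := by
    simp only [hZ, J]
    exact (hX.hasFDerivAt.const_smul Complex.I).neg.fderiv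
  rw [bracket, DD, DD, hT1, hT2, hZ2, hZ p]
  simp only [gC, TF, Prod.fst_sub, Prod.snd_sub, neg_apply, FunLike.coe_smul, Pi.smul_apply,
    I_smul_eq_J, zero_apply, map_neg, map_zero, sub_zero, zero_add,
    rI_add_left, rI_sub_left, rI_neg_left, rI_zero_left, rI_zero_right, rI_J_J]
  congr 3 <;> ring

end Derivatives

namespace IsHypersurface
variable {n : ℕ} {M : Set (E n)} {ν : E n → E n} {p : E n}

lemma hasStrictFDerivAt_normal (hM : IsHypersurface M ν) (p : E n) :
    HasStrictFDerivAt ν (fderiv ℝ ν p) p :=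
  hM.1.contDiffAt.hasStrictFDerivAt (by simp)

lemma fderiv_normal_ne_zero (hM : IsHypersurface M ν) (hp : p ∈ M) {V : Set (E n)}
    {F : E n → ℝ} (hpV : p ∈ V) (hker : ∀ z ∈ M ∩ V, ∀ X, fderiv ℝ F z X = 0 ↔ X ∈ tangAt ν z) :
    fderiv ℝ F p (ν p) ≠ 0 := by
  intro h
  have h2 : rI (ν p) (ν p) = 0 := (hker p ⟨hp, hpV⟩ (ν p)).1 h
  rw [rI_self, hM.2.1 p hp] at h2
  norm_num at h2

/-- A function vanishing on `M` has no derivative along `T_pM`: `M` is locally a level set of a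
submersion `F`, so this is the Lagrange multiplier rule for the constant function on `{F = 0}`. -/
lemma hasStrictFDerivAt_apply_tangent_eq_zero (hM : IsHypersurface M ν) (hp : p ∈ M)
    {u : E n} (hu : u ∈ tangAt ν p) {G : E n → ℝ} {G' : E n →L[ℝ] ℝ}
    (hG : HasStrictFDerivAt G G' p) (h0 : ∀ᶠ z in 𝓝 p, z ∈ M → G z = 0) : G' u = 0 := by
  obtain ⟨V, F, hV, hpV, hF, hMV, hker⟩ := hM.2.2 p hp
  have hFp : F p = 0 := by
    have : p ∈ M ∩ V := ⟨hp, hpV⟩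
    rw [hMV] at this
    exact this.2
  have hextr : IsLocalExtrOn G {z | F z = F p} p := by
    refine Or.inl (Filter.eventually_inf_principal.2 ?_)
    filter_upwards [h0, hV.mem_nhds hpV] with z hz hzV hFz
    have hzM : z ∈ M ∩ V := hMV ▸ ⟨hzV, hFz.trans hFp⟩
    rw [hz hzM.1, h0.self_of_nhds hp]
  obtain ⟨a, b, hab, hlin⟩ := hextr.exists_multipliers_of_hasStrictFDerivAt_1d
    ((hF.contDiffAt (hV.mem_nhds hpV)).hasStrictFDerivAt (by simp)) hG
  have hlin_apply (v : E n) : a * fderiv ℝ F p v + b * G' v = 0 := by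
    simpa using congrArg (fun L : E n →L[ℝ] ℝ => L v) hlin
  have hb : b ≠ 0 := by
    rintro rfl
    have ha : a ≠ 0 := by simpa using hab
    have := hlin_apply (ν p)
    simp only [zero_mul, add_zero, mul_eq_zero, ha, false_or] at this
    exact fderiv_normal_ne_zero hM hp hpV hker this
  have := hlin_apply u
  rw [(hker p ⟨hp, hpV⟩ u).2 hu, mul_zero, zero_add] at this
  exact (mul_eq_zero.1 this).resolve_left hb

lemma inner_fderiv_add_inner_fderiv_eq_zero (hM : IsHypersurface M ν) (hp : p ∈ M)
    {u : E n} (hu : u ∈ tangAt ν p) {f g : E n → E n} {f' g' : E n →L[ℝ] E n}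
    (hf : HasStrictFDerivAt f f' p) (hg : HasStrictFDerivAt g g' p) {c : ℂ}
    (h : ∀ z ∈ M, inner ℂ (f z) (g z) = c) :
    inner ℂ (f' u) (g p) + inner ℂ (f p) (g' u) = 0 := by
  have hderiv (φ : ℂ →L[ℝ] ℝ) : φ (inner ℂ (f' u) (g p) + inner ℂ (f p) (g' u)) = 0 := by
    have := hM.hasStrictFDerivAt_apply_tangent_eq_zero hp hu
      ((φ.hasStrictFDerivAt.comp p (hf.inner ℂ hg)).sub_const (φ c))
      (.of_forall fun z hz => by rw [h z hz, sub_self])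
    simpa [fderivInnerCLM_apply, add_comm] using this
  exact Complex.ext (by simpa using hderiv Complex.reCLM) (by simpa using hderiv Complex.imCLM)

/-- On `M ∩ V` the differential of the defining function is `dF_z = dF_z(ν z) ⟨ν z, ·⟩`;
differentiating this identity along `T_pM` identifies the Hessian of `F` on `T_pM` with
`dF_p(ν p)` times the second fundamental form, whose symmetry follows from Schwarz's theorem. -/
lemma rI_fderiv_comm (hM : IsHypersurface M ν) (hp : p ∈ M) {u w : E n}
    (hu : u ∈ tangAt ν p) (hw : w ∈ tangAt ν p) :
    rI (fderiv ℝ ν p u) w = rI (fderiv ℝ ν p w) u := by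
  obtain ⟨V, F, hV, hpV, hF, hMV, hker⟩ := hM.2.2 p hp
  have hFp : ContDiffAt ℝ (⊤ : ℕ∞) F p := hF.contDiffAt (hV.mem_nhds hpV)
  have hν := hM.hasStrictFDerivAt_normal p
  set Φ := fderiv ℝ F
  set H := fderiv ℝ Φ p
  have hΦ : HasStrictFDerivAt Φ H p :=
    (hFp.fderiv_right (m := 1) (by norm_cast)).hasStrictFDerivAt (by simp)
  have hessian (v q : E n) (hv : v ∈ tangAt ν p) (hq : q ∈ tangAt ν p) :
      H v q = Φ p (ν p) * rI (fderiv ℝ ν p v) q := by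
    have hG := (hΦ.clm_apply (hasStrictFDerivAt_const q p)).sub
      ((Complex.reCLM.hasStrictFDerivAt.comp p (hν.inner ℂ (hasStrictFDerivAt_const q p))).mul
        (hΦ.clm_apply hν))
    have h0 : ∀ᶠ z in 𝓝 p, z ∈ M → Φ z q - (inner ℂ (ν z) q).re * Φ z (ν z) = 0 := by
      filter_upwards [hV.mem_nhds hpV] with z hzV hzM
      have htan : q - rI (ν z) q • ν z ∈ tangAt ν z := by
        simp only [tangAt, Set.mem_ofPred_eq, rI_sub_right, rI_smul_right, rI_self,
          hM.2.1 z hzM]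
        ring
      have := (hker z ⟨hzM, hzV⟩ _).2 htan
      rw [map_sub, map_smul, smul_eq_mul] at this
      exact this
    have := hM.hasStrictFDerivAt_apply_tangent_eq_zero hp hv hG h0
    have hq' : (inner ℂ (ν p) q).re = 0 := hq
    simp only [ContinuousLinearMap.comp_zero, zero_add, Complex.reCLM_apply, hq', smul_add,
      zero_smul, add_zero, sub_apply, ContinuousLinearMap.flip_apply, smul_apply,
      ContinuousLinearMap.comp_apply, ContinuousLinearMap.prod_apply, zero_apply,
      fderivInnerCLM_apply, inner_zero_right, smul_eq_mul] at this
    rw [rI]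
    linarith
  have hΦν := fderiv_normal_ne_zero hM hp hpV hker
  have := (hFp.isSymmSndFDerivAt (by simp; exact WithTop.coe_le_coe.2 le_top)) u w
  rw [hessian u w hu hw, hessian w u hw hu] at this
  exact mul_left_cancel₀ hΦν this

lemma rI_fderiv_apply_self (hM : IsHypersurface M ν) (hp : p ∈ M) {u : E n}
    (hu : u ∈ tangAt ν p) : rI (fderiv ℝ ν p u) (ν p) = 0 := by
  have hν := hM.hasStrictFDerivAt_normal p
  have h := congrArg Complex.re <| hM.inner_fderiv_add_inner_fderiv_eq_zero hp hu hν hν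
    (c := 1) fun z hz => by rw [inner_self_eq_norm_sq_to_K, hM.2.1 z hz]; simp
  rw [Complex.add_re, Complex.zero_re] at h
  change rI _ _ + rI _ _ = 0 at h
  rw [rI_comm (ν p)] at h
  linarith

lemma rI_fderiv_apply_J_normal (hM : IsHypersurface M ν) (hp : p ∈ M) {X : E n → E n}
    {X' : E n →L[ℝ] E n} (hX : HasStrictFDerivAt X X' p)
    (hperp : ∀ z ∈ M, inner ℂ (ν z) (X z) = 0) :
    rI (X' (J (ν p))) (ν p) = -rI (fderiv ℝ ν p (X p)) (J (ν p)) ∧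
      rI (X' (J (ν p))) (J (ν p)) = rI (fderiv ℝ ν p (J (X p))) (J (ν p)) := by
  have hν := hM.hasStrictFDerivAt_normal p
  have hT : J (ν p) ∈ tangAt ν p := J_normal_mem_tangAt
  have hXt := mem_tangAt_of_inner_eq_zero (hperp p hp)
  have hJXt := J_mem_tangAt_of_inner_eq_zero (hperp p hp)
  have h := hM.inner_fderiv_add_inner_fderiv_eq_zero hp hT hν hX hperp
  have hre : rI (fderiv ℝ ν p (J (ν p))) (X p) + rI (ν p) (X' (J (ν p))) = 0 := by
    simpa [rI] using congrArg Complex.re h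
  have him : rI (fderiv ℝ ν p (J (ν p))) (J (X p)) + rI (ν p) (J (X' (J (ν p)))) = 0 := by
    have := congrArg Complex.im h
    rw [Complex.add_im, Complex.zero_im] at this
    rw [rI_J_right, rI_J_right]
    linarith
  rw [hM.rI_fderiv_comm hp hT hXt] at hre
  rw [hM.rI_fderiv_comm hp hT hJXt, ← neg_neg (rI (ν p) _), ← rI_J_left] at him
  constructor <;> linarith [rI_comm (ν p) (X' (J (ν p))), rI_comm (J (ν p)) (X' (J (ν p)))]

end IsHypersurface

theorem stmt2 {n : ℕ} (M : Set (E n)) (ν : E n → E n)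
    (hsurf : IsHypersurface M ν)
    (Z : E n → CV n) (hZ : IsHoloField M ν Z) :
    ∀ p ∈ M, gC (DD (NF ν) (Z p) p) (conjCV (NF ν p)) = gC (bracket (TF ν) Z p) (TF ν p) := by
  intro p hp
  obtain ⟨hX, hZJ, hperp⟩ := hZ
  have hν := (hsurf.hasStrictFDerivAt_normal p).differentiableAt
  have hXp : HasStrictFDerivAt (fun z => (Z z).1) _ p := hX.contDiffAt.hasStrictFDerivAt (by simp)
  obtain ⟨hBν, hBT⟩ := hsurf.rI_fderiv_apply_J_normal hp hXp hperp
  rw [gC_DD_NF_conjCV hν (hZJ p), gC_bracket_TF hν hXp.differentiableAt hZJ,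
    hsurf.rI_fderiv_apply_self hp (mem_tangAt_of_inner_eq_zero (hperp p hp)),
    hsurf.rI_fderiv_apply_self hp (J_mem_tangAt_of_inner_eq_zero (hperp p hp)), hBν, hBT]
  push_cast
  ring
end
end

section
/- For all holomorphic tangent fields U, V on M the Lie bracket [U,V] is again a holomorphic tangent field and ∇_U V − ∇_V U = [U, V]; that is, Tor_∇(U,V) = 0 on holomorphic fields. -/
noncomputable section
open scoped BigOperators

/-!
On `M` a holomorphic field `Z = X - iJX` is built from the real tangent fields `X` and `JX`,
so `[Z, W]` is a combination of Lie brackets of real tangent fields. These are tangent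
because a local defining function `F` of `M` has a symmetric second derivative; together
with `J`-linearity of the flat derivative this makes `[Z, W]` holomorphic again.
Along `M` a holomorphic field `V` satisfies `Π_H V = V`, `Π_H̄ V = 0` and `g(V, T) = 0`, and
by the implicit function theorem a function vanishing on `M` has zero derivative in tangent
directions. Hence `∇_U V = D_U V - g(D_U V, N̄) N`, and
`∇_U V - ∇_V U = [U, V] - g([U, V], N̄) N = [U, V]` since `[U, V]` is holomorphic.
-/

open Filter Topology

section

variable {n : ℕ}

lemma rI_eq_inner (x y : E n) : rI x y = inner ℝ x y := by
  simp [rI, PiLp.inner_apply, Complex.re_sum]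

lemma gC_sub_left (v v' w : CV n) : gC (v - v') w = gC v w - gC v' w := by
  simp only [gC, Prod.fst_sub, Prod.snd_sub, rI_eq_inner, inner_sub_left]
  push_cast
  ring

@[fun_prop] lemma ContDiff.rI {f g : E n → E n} (hf : ContDiff ℝ (⊤ : ℕ∞) f)
    (hg : ContDiff ℝ (⊤ : ℕ∞) g) : ContDiff ℝ (⊤ : ℕ∞) (fun z => rI (f z) (g z)) := by
  simp only [rI_eq_inner]
  exact hf.inner ℝ hg

@[fun_prop] lemma ContDiff.J {f : E n → E n} (hf : ContDiff ℝ (⊤ : ℕ∞) f) :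
    ContDiff ℝ (⊤ : ℕ∞) (fun z => J (f z)) :=
  hf.const_smul Complex.I

@[fun_prop] lemma ContDiff.ofReal {F : Type*} [NormedAddCommGroup F] [NormedSpace ℝ F]
    {f : F → ℝ} (hf : ContDiff ℝ (⊤ : ℕ∞) f) : ContDiff ℝ (⊤ : ℕ∞) (fun z => (f z : ℂ)) :=
  Complex.ofRealCLM.contDiff.comp hf

lemma fderiv_J_apply {f : E n → E n} {p : E n} (hf : DifferentiableAt ℝ f p) (w : E n) :
    fderiv ℝ (fun z => J (f z)) p w = J (fderiv ℝ f p w) := by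
  simp only [J, fderiv_fun_const_smul hf, FunLike.coe_smul, Pi.smul_apply]

lemma contDiff_fderiv_apply {F : Type*} [NormedAddCommGroup F] [NormedSpace ℝ F]
    {P : E n → F} {Q : E n → E n} (hP : ContDiff ℝ (⊤ : ℕ∞) P) (hQ : ContDiff ℝ (⊤ : ℕ∞) Q) :
    ContDiff ℝ (⊤ : ℕ∞) (fun z => fderiv ℝ P z (Q z)) :=
  (hP.fderiv_right (by decide)).clm_apply hQ

namespace IsHypersurface

variable {M : Set (E n)} {ν : E n → E n} {p : E n}

lemma exists_local_param (hM : IsHypersurface M ν) (hp : p ∈ M) :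
    ∃ (K : Submodule ℝ (E n)) (ψ : K → E n), ψ 0 = p ∧ HasFDerivAt ψ K.subtypeL 0 ∧
      (∀ᶠ y in 𝓝 0, ψ y ∈ M) ∧ ∀ w ∈ tangAt ν p, w ∈ K := by
  obtain ⟨-, hnorm, hloc⟩ := hM
  obtain ⟨V, F, hVopen, hpV, hF, hMV, hker⟩ := hloc p hp
  set f' := fderiv ℝ F p
  have hstrict : HasStrictFDerivAt F f' p :=
    (hF.contDiffAt (hVopen.mem_nhds hpV)).hasStrictFDerivAt (by decide)
  have hfν : f' (ν p) ≠ 0 := fun h => by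
    have h1 : rI (ν p) (ν p) = 0 := (hker p ⟨hp, hpV⟩ (ν p)).1 h
    rw [rI_eq_inner, real_inner_self_eq_norm_sq, hnorm p hp] at h1
    norm_num at h1
  have hrange : (f' : E n →ₗ[ℝ] ℝ).range = ⊤ := by
    refine LinearMap.range_eq_top.2 fun r => ⟨(r / f' (ν p)) • ν p, ?_⟩
    simp [map_smul, hfν]
  set ψ := hstrict.implicitFunction F f' hrange (F p)
  have hψ0 : ψ 0 = p := hstrict.implicitFunction_apply_image hrange
  have hψ := (hstrict.to_implicitFunction hrange).hasFDerivAt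
  have hψp : Tendsto ψ (𝓝 0) (𝓝 p) := hψ0 ▸ hψ.continuousAt.tendsto
  have hFψ : ∀ᶠ y in 𝓝 0, F (ψ y) = F p :=
    (tendsto_const_nhds.prodMk_nhds tendsto_id).eventually
      (hstrict.map_implicitFunction_eq hrange)
  refine ⟨_, ψ, hψ0, hψ, ?_, fun w hw => (hker p ⟨hp, hpV⟩ w).2 hw⟩
  filter_upwards [hFψ, hψp.eventually (hVopen.mem_nhds hpV)] with y hy hyV
  have hFp : F p = 0 := ((Set.ext_iff.1 hMV p).1 ⟨hp, hpV⟩).2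
  exact ((Set.ext_iff.1 hMV (ψ y)).2 ⟨hyV, hy.trans hFp⟩).1

lemma fderiv_apply_eq_zero {F : Type*} [NormedAddCommGroup F] [NormedSpace ℝ F]
    (hM : IsHypersurface M ν) (hp : p ∈ M) {G : E n → F} (hG : DifferentiableAt ℝ G p)
    (hG0 : ∀ᶠ z in 𝓝 p, z ∈ M → G z = 0) {w : E n} (hw : w ∈ tangAt ν p) :
    fderiv ℝ G p w = 0 := by
  obtain ⟨K, ψ, rfl, hψ, hψM, hK⟩ := hM.exists_local_param hp
  have hGψ : G ∘ ψ =ᶠ[𝓝 0] fun _ => 0 := by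
    filter_upwards [hψM, hψ.continuousAt.eventually hG0] with y hyM hy
    exact hy hyM
  have hcomp := hG.hasFDerivAt.comp 0 hψ
  simpa using congrArg (fun L => L ⟨w, hK w hw⟩) (hcomp.fderiv.symm.trans hGψ.fderiv_eq)

lemma fderiv_apply_eq_of_eqOn {F : Type*} [NormedAddCommGroup F] [NormedSpace ℝ F]
    (hM : IsHypersurface M ν) (hp : p ∈ M) {G₁ G₂ : E n → F}
    (hG₁ : DifferentiableAt ℝ G₁ p) (hG₂ : DifferentiableAt ℝ G₂ p) (hG : Set.EqOn G₁ G₂ M)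
    {w : E n} (hw : w ∈ tangAt ν p) : fderiv ℝ G₁ p w = fderiv ℝ G₂ p w := by
  have h := hM.fderiv_apply_eq_zero hp (hG₁.sub hG₂)
    (Eventually.of_forall fun z hz => sub_eq_zero.2 (hG hz)) hw
  rwa [fderiv_sub hG₁ hG₂, _root_.sub_apply, sub_eq_zero] at h

lemma fderiv_sub_fderiv_mem_tangAt (hM : IsHypersurface M ν) (hp : p ∈ M) {P Q : E n → E n}
    (hP : ContDiff ℝ (⊤ : ℕ∞) P) (hQ : ContDiff ℝ (⊤ : ℕ∞) Q)
    (hPM : ∀ z ∈ M, P z ∈ tangAt ν z) (hQM : ∀ z ∈ M, Q z ∈ tangAt ν z) :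
    fderiv ℝ Q p (P p) - fderiv ℝ P p (Q p) ∈ tangAt ν p := by
  obtain ⟨V, F, hVo, hpV, hF, hMV, hker⟩ := hM.2.2 p hp
  have hFp : ContDiffAt ℝ (⊤ : ℕ∞) F p := hF.contDiffAt (hVo.mem_nhds hpV)
  have hdF : DifferentiableAt ℝ (fderiv ℝ F) p :=
    (hFp.fderiv_right (m := 1) (by decide)).differentiableAt (by decide)
  -- differentiating `z ↦ dF_z (P z)`, which vanishes on `M`, along `Q p`
  have hcross : ∀ P Q : E n → E n, ContDiff ℝ (⊤ : ℕ∞) P → (∀ z ∈ M, P z ∈ tangAt ν z) →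
      Q p ∈ tangAt ν p →
      fderiv ℝ F p (fderiv ℝ P p (Q p)) + fderiv ℝ (fderiv ℝ F) p (Q p) (P p) = 0 := by
    intro P Q hP hPM hQp
    have hPd : DifferentiableAt ℝ P p := hP.differentiable (by decide) p
    have h := hM.fderiv_apply_eq_zero hp (hdF.clm_apply hPd)
      (Filter.mem_of_superset (hVo.mem_nhds hpV) fun z hzV hzM =>
        (hker z ⟨hzM, hzV⟩ (P z)).2 (hPM z hzM)) hQp
    simpa [fderiv_clm_apply hdF hPd] using h
  have hsymm : fderiv ℝ (fderiv ℝ F) p (Q p) (P p) = fderiv ℝ (fderiv ℝ F) p (P p) (Q p) :=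
    hFp.isSymmSndFDerivAt (by rw [minSmoothness_of_isRCLikeNormedField]; decide) (Q p) (P p)
  refine (hker p ⟨hp, hpV⟩ _).1 ?_
  have h₁ := hcross P Q hP hPM (hQM p hp)
  have h₂ := hcross Q P hQ hQM (hPM p hp)
  rw [map_sub]
  linarith

end IsHypersurface

section Fields

variable {M : Set (E n)} {ν : E n → E n} {U V Z : E n → CV n} {p : E n}

lemma mem_tangAt_iff {x : E n} : x ∈ tangAt ν p ↔ inner ℝ (ν p) x = 0 := by
  rw [tangAt, Set.mem_ofPred_eq, rI_eq_inner]

lemma IsCTField.bracket (hM : IsHypersurface M ν) (hU : IsCTField M ν U)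
    (hV : IsCTField M ν V) : IsCTField M ν (bracket U V) := by
  obtain ⟨hU₁, hU₂, hUM⟩ := hU
  obtain ⟨hV₁, hV₂, hVM⟩ := hV
  refine ⟨?_, ?_, fun p hp => ?_⟩
  · exact ((contDiff_fderiv_apply hV₁ hU₁).sub (contDiff_fderiv_apply hV₂ hU₂)).sub
      ((contDiff_fderiv_apply hU₁ hV₁).sub (contDiff_fderiv_apply hU₂ hV₂))
  · exact ((contDiff_fderiv_apply hV₁ hU₂).add (contDiff_fderiv_apply hV₂ hU₁)).sub
      ((contDiff_fderiv_apply hU₁ hV₂).add (contDiff_fderiv_apply hU₂ hV₁))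
  have h₁₁ := hM.fderiv_sub_fderiv_mem_tangAt hp hU₁ hV₁ (fun z hz => (hUM z hz).1)
    (fun z hz => (hVM z hz).1)
  have h₂₂ := hM.fderiv_sub_fderiv_mem_tangAt hp hU₂ hV₂ (fun z hz => (hUM z hz).2)
    (fun z hz => (hVM z hz).2)
  have h₁₂ := hM.fderiv_sub_fderiv_mem_tangAt hp hU₁ hV₂ (fun z hz => (hUM z hz).1)
    (fun z hz => (hVM z hz).2)
  have h₂₁ := hM.fderiv_sub_fderiv_mem_tangAt hp hU₂ hV₁ (fun z hz => (hUM z hz).2)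
    (fun z hz => (hVM z hz).1)
  simp only [mem_tangAt_iff, inner_sub_right] at h₁₁ h₂₂ h₁₂ h₂₁
  simp only [_root_.bracket, DD, rI_eq_inner, Prod.fst_sub, Prod.snd_sub, inner_sub_right,
    inner_add_right]
  constructor <;> linarith

lemma IsHoloField.isCTField (hZ : IsHoloField M ν Z) : IsCTField M ν Z := by
  refine ⟨hZ.1, ?_, fun p hp => ?_⟩
  · rw [funext hZ.2.1]
    exact hZ.1.J.neg
  · simp [rI, J, hZ.2.1 p, inner_smul_right, hZ.2.2 p hp]

lemma IsCTField.isHoloField (hZ : IsCTField M ν Z) (hJ : ∀ z, (Z z).2 = -J (Z z).1) :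
    IsHoloField M ν Z := by
  refine ⟨hZ.1, hJ, fun p hp => Complex.ext ?_ ?_⟩
  · simpa [rI] using (hZ.2.2 p hp).1
  · simpa [rI, J, hJ p, inner_smul_right] using (hZ.2.2 p hp).2

lemma IsHoloField.DD_snd (hV : IsHoloField M ν V) {u : CV n} (hu : u.2 = -J u.1) (p : E n) :
    (DD V u p).2 = -J (DD V u p).1 := by
  have hV₁ : DifferentiableAt ℝ (fun z => (V z).1) p := hV.1.differentiable (by decide) p
  have hV₂ : ∀ w, fderiv ℝ (fun z => (V z).2) p w = -J (fderiv ℝ (fun z => (V z).1) p w) := by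
    intro w
    rw [funext hV.2.1, fderiv_fun_neg, _root_.neg_apply, fderiv_J_apply hV₁]
  simp only [DD, hV₂, hu, map_neg, J, smul_neg, neg_neg, smul_sub, smul_smul,
    Complex.I_mul_I, neg_smul, one_smul]
  abel

lemma IsHoloField.bracket_snd (hU : IsHoloField M ν U) (hV : IsHoloField M ν V) (p : E n) :
    (bracket U V p).2 = -J (bracket U V p).1 := by
  simp only [bracket, Prod.fst_sub, Prod.snd_sub, hV.DD_snd (hU.2.1 p), hU.DD_snd (hV.2.1 p),
    J, smul_sub]
  abel

lemma IsHoloField.bracket (hM : IsHypersurface M ν) (hU : IsHoloField M ν U)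
    (hV : IsHoloField M ν V) : IsHoloField M ν (bracket U V) :=
  (hU.isCTField.bracket hM hV.isCTField).isHoloField (hU.bracket_snd hV)

end Fields

section Connection

variable {M : Set (E n)} {ν : E n → E n} {U V : E n → CV n} {p : E n}

lemma DD_eq_of_eqOn (hM : IsHypersurface M ν) (hp : p ∈ M) {V₁ V₂ : E n → CV n}
    (hV₁ : DifferentiableAt ℝ V₁ p) (hV₂ : DifferentiableAt ℝ V₂ p) (hV : Set.EqOn V₁ V₂ M)
    {u : CV n} (hu₁ : u.1 ∈ tangAt ν p) (hu₂ : u.2 ∈ tangAt ν p) : DD V₁ u p = DD V₂ u p := by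
  have h₁ {w} (hw : w ∈ tangAt ν p) := hM.fderiv_apply_eq_of_eqOn hp hV₁.fst hV₂.fst
    (fun z hz => congrArg Prod.fst (hV hz)) hw
  have h₂ {w} (hw : w ∈ tangAt ν p) := hM.fderiv_apply_eq_of_eqOn hp hV₁.snd hV₂.snd
    (fun z hz => congrArg Prod.snd (hV hz)) hw
  simp only [DD, h₁ hu₁, h₁ hu₂, h₂ hu₁, h₂ hu₂]

lemma dC_eq_zero (hM : IsHypersurface M ν) (hp : p ∈ M) {f : E n → ℂ}
    (hf : DifferentiableAt ℝ f p) (hf₀ : ∀ z ∈ M, f z = 0) {u : CV n}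
    (hu₁ : u.1 ∈ tangAt ν p) (hu₂ : u.2 ∈ tangAt ν p) : dC f u p = 0 := by
  have h {w} (hw : w ∈ tangAt ν p) :=
    hM.fderiv_apply_eq_zero hp hf (Eventually.of_forall hf₀) hw
  simp only [dC, h hu₁, h hu₂, mul_zero, add_zero]

lemma IsHoloField.horR_eq (hV : IsHoloField M ν V) {z : E n} (hz : z ∈ M) :
    horR ν z (V z).1 = (V z).1 ∧ horR ν z (V z).2 = (V z).2 := by
  simp [horR, rI, J, hV.2.1 z, inner_smul_left, inner_smul_right, hV.2.2 z hz]

lemma IsHoloField.PiH_eq (hV : IsHoloField M ν V) {z : E n} (hz : z ∈ M) :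
    PiH ν z (V z) = V z := by
  obtain ⟨h₁, h₂⟩ := hV.horR_eq hz
  refine Prod.ext ?_ ?_ <;> simp only [PiH, h₁, h₂] <;> rw [hV.2.1 z] <;>
    simp only [J, smul_neg, smul_smul, Complex.I_mul_I, neg_smul, one_smul, neg_neg] <;>
    module

lemma IsHoloField.PiHb_eq_zero (hV : IsHoloField M ν V) {z : E n} (hz : z ∈ M) :
    PiHb ν z (V z) = 0 := by
  obtain ⟨h₁, h₂⟩ := hV.horR_eq hz
  refine Prod.ext ?_ ?_ <;> simp only [PiHb, h₁, h₂] <;> rw [hV.2.1 z] <;>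
    simp only [J, smul_neg, smul_smul, Complex.I_mul_I, neg_smul, one_smul, neg_neg,
      Prod.fst_zero, Prod.snd_zero] <;>
    module

lemma IsHoloField.gC_TF_eq_zero (hV : IsHoloField M ν V) {z : E n} (hz : z ∈ M) :
    gC (V z) (TF ν z) = 0 := by
  have h : inner ℂ (V z).1 (ν z) = 0 := inner_eq_zero_symm.1 (hV.2.2 z hz)
  simp [gC, TF, rI, J, hV.2.1 z, inner_smul_left, h]

lemma IsHoloField.gC_conjCV_NF_eq_zero (hV : IsHoloField M ν V) (hp : p ∈ M) :
    gC (V p) (conjCV (NF ν p)) = 0 := by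
  have h : inner ℂ (V p).1 (ν p) = 0 := inner_eq_zero_symm.1 (hV.2.2 p hp)
  simp [gC, NF, conjCV, rI, J, hV.2.1 p, inner_smul_left, h]

lemma IsHoloField.nabla_eq (hM : IsHypersurface M ν) (hV : IsHoloField M ν V) (hp : p ∈ M)
    {u : CV n} (hu₁ : u.1 ∈ tangAt ν p) (hu₂ : u.2 ∈ tangAt ν p) :
    nabla ν V u p = DD V u p - csmul (gC (DD V u p) (conjCV (NF ν p))) (NF ν p) := by
  have hν := hM.1
  obtain ⟨hV₁, hV₂, -⟩ := hV.isCTField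
  have hPiH : ContDiff ℝ (⊤ : ℕ∞) (fun z => PiH ν z (V z)) := by
    simp only [PiH, horR]
    fun_prop
  have hPiHb : ContDiff ℝ (⊤ : ℕ∞) (fun z => PiHb ν z (V z)) := by
    simp only [PiHb, horR]
    fun_prop
  have hVT : ContDiff ℝ (⊤ : ℕ∞) (fun z => gC (V z) (TF ν z)) := by
    simp only [gC, TF]
    fun_prop
  rw [nabla, DD_eq_of_eqOn hM hp (hPiH.differentiable (by decide) p)
      ((hV₁.prodMk hV₂).differentiable (by decide) p) (fun z hz => hV.PiH_eq hz) hu₁ hu₂,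
    DD_eq_of_eqOn hM hp (hPiHb.differentiable (by decide) p) (differentiableAt_const 0)
      (fun z hz => hV.PiHb_eq_zero hz) hu₁ hu₂,
    dC_eq_zero hM hp (hVT.differentiable (by decide) p) (fun z hz => hV.gC_TF_eq_zero hz) hu₁ hu₂]
  simp [DD, csmul, gC, rI]

end Connection

end

theorem stmt8 {n : ℕ} (M : Set (E n)) (ν : E n → E n)
    (hsurf : IsHypersurface M ν)
    (U V : E n → CV n) (hU : IsHoloField M ν U) (hV : IsHoloField M ν V) :
    IsHoloField M ν (bracket U V) ∧
    ∀ p ∈ M, nabla ν V (U p) p - nabla ν U (V p) p = bracket U V p := by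
  refine ⟨hU.bracket hsurf hV, fun p hp => ?_⟩
  obtain ⟨hUp₁, hUp₂⟩ := hU.isCTField.2.2 p hp
  obtain ⟨hVp₁, hVp₂⟩ := hV.isCTField.2.2 p hp
  have hN : gC (DD V (U p) p) (conjCV (NF ν p)) = gC (DD U (V p) p) (conjCV (NF ν p)) :=
    sub_eq_zero.1 <| (gC_sub_left _ _ _).symm.trans
      ((hU.bracket hsurf hV).gC_conjCV_NF_eq_zero hp)
  rw [hV.nabla_eq hsurf hp hUp₁ hUp₂, hU.nabla_eq hsurf hp hVp₁ hVp₂, hN,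
    sub_sub_sub_cancel_right]
  rfl
end
end
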